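/- Let X ∈ ℝ^{d×n} with n ≥ 1, λ > 0, μ > 0, 0 < p, q < 2, and let (Z_t)_{t≥1} be a sequence in ℝ^{n×n} such that for every t, p·Z_{t+1}M_t + λq·Xᵀ(XZ_{t+1} − X)N_t = 0, where M_t = (Z_tᵀZ_t + μ²I)^{p/2−1} and N_t is the diagonal matrix with (N_t)_{ii} = (‖(XZ_t − X)_i‖_2² + μ²)^{q/2−1}. Set D = J(Z_1, μ) and θ = min{ D^{(p−2)/p}, (D/λ)^{(q−2)/q} } > 0. Then ∑_{t=1}^∞ ( p‖Z_t − Z_{t+1}‖_F² + λq‖X(Z_t − Z_{t+1})‖_F² ) ≤ 2D/θ; in particular the series converges. -/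

import Mathlib

open Matrix

/-- Real power of a real symmetric matrix, defined through the spectral decomposition
`A = U · diag(λ₁,…,λₙ) · Uᵀ` as `A^r = U · diag(λ₁^r,…,λₙ^r) · Uᵀ`
(junk value `0` if `A` is not symmetric). -/
noncomputable def mpow {n : ℕ} (A : Matrix (Fin n) (Fin n) ℝ) (r : ℝ) :
    Matrix (Fin n) (Fin n) ℝ :=
  if hA : A.IsHermitian then hA.cfc (fun x : ℝ => x ^ r) else 0

/-- The smoothed LRR objective
`J(Z, μ) = Tr((ZᵀZ + μ²I)^{p/2}) + λ·∑ᵢ (‖(XZ − X)ᵢ‖₂² + μ²)^{q/2}`,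
where `(XZ − X)ᵢ` denotes the `i`-th column of `XZ − X`. -/
noncomputable def smoothJ {d n : ℕ} (X : Matrix (Fin d) (Fin n) ℝ) (lam p q : ℝ)
    (Z : Matrix (Fin n) (Fin n) ℝ) (μ : ℝ) : ℝ :=
  (mpow (Zᵀ * Z + μ ^ 2 • (1 : Matrix (Fin n) (Fin n) ℝ)) (p / 2)).trace +
    lam * ∑ i, (∑ j, ((X * Z - X) j i) ^ 2 + μ ^ 2) ^ (q / 2)

/-!
Each IRLS step minimizes a quadratic majorizer of `J`. Concavity of `x ↦ x ^ r` for `r = p/2, q/2`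
gives the tangent bounds `Tr B^r ≤ Tr A^r + r Tr(A^{r-1}(B - A))` (Klein's inequality) and
`b^r ≤ a^r + r a^{r-1}(b - a)`; at `Z_t` the majorizer touches `J`, and since `Z_{t+1}` is a
stationary point of the quadratic, the quadratic drops from `Z_t` to `Z_{t+1}` by exactly its
homogeneous part evaluated at `Z_t - Z_{t+1}`. Because `J` decreases, every eigenvalue of
`Z_tᵀZ_t + μ²I` and every smoothed column norm is bounded in terms of `D`, so the weights `M_t`
and `N_t` are bounded below by `θ`.
Hence `J(Z_{t+1}) + (θ/2)(p‖Z_t - Z_{t+1}‖² + λq‖X(Z_t - Z_{t+1})‖²) ≤ J(Z_t)`, and the series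
telescopes.
-/

lemma rpow_le_rpow_add_mul_sub {a b r : ℝ} (ha : 0 < a) (hb : 0 ≤ b) (hr0 : 0 ≤ r)
    (hr1 : r ≤ 1) : b ^ r ≤ a ^ r + r * a ^ (r - 1) * (b - a) := by
  have h := rpow_one_add_le_one_add_mul_self (s := b / a - 1)
    (by linarith [div_nonneg hb ha.le]) hr0 hr1
  rw [add_sub_cancel, Real.div_rpow hb ha.le, div_le_iff₀ (Real.rpow_pos_of_pos ha r)] at h
  rw [Real.rpow_sub_one ha.ne']
  calc b ^ r ≤ (1 + r * (b / a - 1)) * a ^ r := h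
    _ = _ := by field_simp

lemma rpow_sub_div_le_rpow_half_sub_one {x D p : ℝ} (hx : 0 < x) (hp0 : 0 < p) (hp2 : p ≤ 2)
    (hxD : x ^ (p / 2) ≤ D) : D ^ ((p - 2) / p) ≤ x ^ (p / 2 - 1) := by
  have hexp : (p - 2) / p ≤ 0 := div_nonpos_of_nonpos_of_nonneg (by linarith) hp0.le
  calc D ^ ((p - 2) / p) ≤ (x ^ (p / 2)) ^ ((p - 2) / p) :=
        Real.rpow_le_rpow_of_nonpos (Real.rpow_pos_of_pos hx _) hxD hexp
    _ = x ^ (p / 2 - 1) := by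
        rw [← Real.rpow_mul hx.le]
        field_simp

namespace Unitary

variable {m : Type*} [Fintype m] [DecidableEq m]

lemma sum_sq_apply_right (O : unitary (Matrix m m ℝ)) (i : m) :
    ∑ j, (O : Matrix m m ℝ) i j ^ 2 = 1 := by
  have h := congrFun (congrFun (coe_mul_star_self O) i) i
  simpa [Matrix.mul_apply, Matrix.star_eq_conjTranspose, sq] using h

lemma sum_sq_apply_left (O : unitary (Matrix m m ℝ)) (j : m) :
    ∑ i, (O : Matrix m m ℝ) i j ^ 2 = 1 := by
  have h := congrFun (congrFun (coe_star_mul_self O) j) j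
  simpa [Matrix.mul_apply, Matrix.star_eq_conjTranspose, sq] using h

end Unitary

namespace Matrix.IsHermitian

variable {m : Type*} [Fintype m] [DecidableEq m] {A B : Matrix m m ℝ}

lemma trace_cfc_mul (hA : A.IsHermitian) (f : ℝ → ℝ) (S : Matrix m m ℝ) :
    (hA.cfc f * S).trace = ∑ i, f (hA.eigenvalues i) *
      (star (hA.eigenvectorUnitary : Matrix m m ℝ) * S * hA.eigenvectorUnitary) i i := by
  rw [IsHermitian.cfc, Unitary.conjStarAlgAut_apply, mul_assoc, trace_mul_comm, ← mul_assoc,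
    trace_mul_comm]
  simp [trace, diagonal_mul]

lemma trace_cfc (hA : A.IsHermitian) (f : ℝ → ℝ) :
    (hA.cfc f).trace = ∑ i, f (hA.eigenvalues i) := by
  simpa using hA.trace_cfc_mul f 1

lemma transpose_cfc (hA : A.IsHermitian) (f : ℝ → ℝ) : (hA.cfc f)ᵀ = hA.cfc f := by
  rw [← conjTranspose_eq_transpose_of_trivial, ← hA.cfc_eq]
  exact cfc_predicate f A

lemma cfc_const_mul (hA : A.IsHermitian) (c : ℝ) (f : ℝ → ℝ) :
    hA.cfc (fun x => c * f x) = c • hA.cfc f := by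
  rw [← hA.cfc_eq, ← hA.cfc_eq, _root_.cfc_const_mul c f A ((Set.toFinite _).continuousOn f)]

lemma diag_conj_self (hA : A.IsHermitian) (i : m) :
    (star (hA.eigenvectorUnitary : Matrix m m ℝ) * A * hA.eigenvectorUnitary) i i =
      hA.eigenvalues i := by
  have h := hA.conjStarAlgAut_star_eigenvectorUnitary
  rw [Unitary.conjStarAlgAut_apply, Unitary.coe_star, star_star] at h
  simp [h]

lemma diag_conj_eq_sum (hA : A.IsHermitian) (hB : B.IsHermitian) (i : m) :
    (star (hA.eigenvectorUnitary : Matrix m m ℝ) * B * hA.eigenvectorUnitary) i i =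
      ∑ j, ((star hA.eigenvectorUnitary * hB.eigenvectorUnitary : unitary (Matrix m m ℝ)) :
        Matrix m m ℝ) i j ^ 2 * hB.eigenvalues j := by
  set W : Matrix m m ℝ := ((star hA.eigenvectorUnitary * hB.eigenvectorUnitary :
    unitary (Matrix m m ℝ)) : Matrix m m ℝ)
  have hW : star (hA.eigenvectorUnitary : Matrix m m ℝ) * B * hA.eigenvectorUnitary =
      W * diagonal hB.eigenvalues * star W := by
    conv_lhs => rw [hB.spectral_theorem]
    simp [W, Unitary.conjStarAlgAut_apply, star_mul, mul_assoc]
  rw [hW, mul_apply]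
  refine Finset.sum_congr rfl fun j _ => ?_
  simp [mul_diagonal, sq]
  ring

lemma trace_cfc_le_of_le_tangent (hA : A.IsHermitian) (hB : B.IsHermitian) {f g : ℝ → ℝ}
    (hfg : ∀ i j, f (hB.eigenvalues j) ≤
      f (hA.eigenvalues i) + g (hA.eigenvalues i) * (hB.eigenvalues j - hA.eigenvalues i)) :
    (hB.cfc f).trace ≤ (hA.cfc f).trace + (hA.cfc g * (B - A)).trace := by
  -- The squares of the entries of the orthogonal matrix relating the two eigenbases form a
  -- doubly stochastic matrix, so both traces are averages over the pairs of eigenvalues.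
  set O := star hA.eigenvectorUnitary * hB.eigenvectorUnitary
  set W : Matrix m m ℝ := (O : Matrix m m ℝ)
  have hdiff : ∀ i, (star (hA.eigenvectorUnitary : Matrix m m ℝ) * (B - A) *
      hA.eigenvectorUnitary) i i = ∑ j, W i j ^ 2 * (hB.eigenvalues j - hA.eigenvalues i) := by
    intro i
    rw [mul_sub, sub_mul, sub_apply, hA.diag_conj_eq_sum hB, hA.diag_conj_self]
    simp only [mul_sub, Finset.sum_sub_distrib, ← Finset.sum_mul, W, O,
      Unitary.sum_sq_apply_right, one_mul]
  rw [hB.trace_cfc, hA.trace_cfc, hA.trace_cfc_mul]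
  simp only [hdiff]
  calc ∑ j, f (hB.eigenvalues j)
      = ∑ j, ∑ i, W i j ^ 2 * f (hB.eigenvalues j) := by
        simp [← Finset.sum_mul, W, Unitary.sum_sq_apply_left]
    _ ≤ ∑ j, ∑ i, W i j ^ 2 * (f (hA.eigenvalues i) +
          g (hA.eigenvalues i) * (hB.eigenvalues j - hA.eigenvalues i)) := by
        gcongr with j _ i _
        exact hfg i j
    _ = _ := by
        rw [Finset.sum_comm, ← Finset.sum_add_distrib]
        refine Finset.sum_congr rfl fun i _ => ?_
        simp only [mul_add, Finset.sum_add_distrib, ← Finset.sum_mul, Unitary.sum_sq_apply_right,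
          W, one_mul, Finset.mul_sum]
        congr 1
        refine Finset.sum_congr rfl fun j _ => ?_
        ring

lemma trace_cfc_rpow_le (hA : A.IsHermitian) (hB : B.IsHermitian)
    (ha : ∀ i, 0 < hA.eigenvalues i) (hb : ∀ j, 0 ≤ hB.eigenvalues j) {r : ℝ} (hr0 : 0 ≤ r)
    (hr1 : r ≤ 1) :
    (hB.cfc fun x : ℝ => x ^ r).trace ≤ (hA.cfc fun x : ℝ => x ^ r).trace +
      r * ((hA.cfc fun x : ℝ => x ^ (r - 1)) * (B - A)).trace := by
  have h := hA.trace_cfc_le_of_le_tangent hB (f := fun x : ℝ => x ^ r)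
    (g := fun x => r * x ^ (r - 1)) fun i j => rpow_le_rpow_add_mul_sub (ha i) (hb j) hr0 hr1
  rwa [hA.cfc_const_mul, smul_mul_assoc, trace_smul, smul_eq_mul] at h

lemma mul_trace_le_trace_cfc_mul (hA : A.IsHermitian) {S : Matrix m m ℝ} (hS : S.PosSemidef)
    {f : ℝ → ℝ} {θ : ℝ} (hf : ∀ i, θ ≤ f (hA.eigenvalues i)) :
    θ * S.trace ≤ (hA.cfc f * S).trace := by
  set U : Matrix m m ℝ := (hA.eigenvectorUnitary : Matrix m m ℝ)
  have hS' : (star U * S * U).PosSemidef := by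
    simpa [star_eq_conjTranspose] using hS.conjTranspose_mul_mul_same U
  have htr : S.trace = (star U * S * U).trace := by
    rw [trace_mul_cycle, mem_unitaryGroup_iff.mp hA.eigenvectorUnitary.2, one_mul]
  rw [hA.trace_cfc_mul, htr, trace, Finset.mul_sum]
  exact Finset.sum_le_sum fun i _ => mul_le_mul_of_nonneg_right (hf i) hS'.diag_nonneg

end Matrix.IsHermitian

namespace Matrix

variable {k l m : Type*} [Fintype k] [Fintype l] [Fintype m]

lemma posSemidef_transpose_mul_self (G : Matrix k l ℝ) : (Gᵀ * G).PosSemidef := by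
  simpa using posSemidef_conjTranspose_mul_self G

lemma posDef_transpose_mul_self_add_smul_one [DecidableEq l] (G : Matrix k l ℝ) {c : ℝ}
    (hc : 0 < c) : (Gᵀ * G + c • (1 : Matrix l l ℝ)).PosDef :=
  PosDef.posSemidef_add G.posSemidef_transpose_mul_self (PosDef.one.smul hc)

lemma mul_trace_le_trace_diagonal_mul [DecidableEq l] {S : Matrix l l ℝ} (hS : S.PosSemidef)
    {ν : l → ℝ} {θ : ℝ} (hν : ∀ i, θ ≤ ν i) : θ * S.trace ≤ (diagonal ν * S).trace := by
  simp only [trace, diag_apply, diagonal_mul, Finset.mul_sum]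
  gcongr with i
  · exact hS.diag_nonneg
  · exact hν i

lemma trace_diagonal_mul_transpose_mul_self [DecidableEq l] (ν : l → ℝ) (G : Matrix k l ℝ) :
    (diagonal ν * (Gᵀ * G)).trace = ∑ i, ν i * ∑ j, G j i ^ 2 := by
  simp only [trace, diag_apply, diagonal_mul]
  simp only [mul_apply, transpose_apply, sq]

lemma trace_transpose_mul_self (G : Matrix k l ℝ) : (Gᵀ * G).trace = ∑ i, ∑ j, G i j ^ 2 := by
  simp only [trace, diag_apply, mul_apply, transpose_apply, ← sq]
  exact Finset.sum_comm

lemma trace_mul_transpose_mul_add_self {N : Matrix l l ℝ} (hN : Nᵀ = N) (G H : Matrix k l ℝ) :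
    (N * ((G + H)ᵀ * (G + H))).trace =
      (N * (Gᵀ * G)).trace + (N * (Hᵀ * H)).trace + 2 * (Hᵀ * (G * N)).trace := by
  have hGH : (N * (Gᵀ * H)).trace = (Hᵀ * (G * N)).trace := by
    rw [← trace_transpose, transpose_mul, transpose_mul, hN, transpose_transpose,
      Matrix.mul_assoc]
  have hHG : (N * (Hᵀ * G)).trace = (Hᵀ * (G * N)).trace := by
    rw [trace_mul_comm, Matrix.mul_assoc]
  simp only [transpose_add, Matrix.add_mul, Matrix.mul_add, trace_add, hGH, hHG]
  ring

lemma trace_quadratic_eq_add_of_stationary (X : Matrix k m ℝ) (Y : Matrix k l ℝ)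
    {M N : Matrix l l ℝ} (hM : Mᵀ = M) (hN : Nᵀ = N) (c₁ c₂ : ℝ) (W₁ W₂ : Matrix m l ℝ)
    (hstat : c₁ • (W₂ * M) + c₂ • (Xᵀ * ((X * W₂ - Y) * N)) = 0) :
    c₁ * (M * (W₁ᵀ * W₁)).trace + c₂ * (N * ((X * W₁ - Y)ᵀ * (X * W₁ - Y))).trace =
      c₁ * (M * (W₂ᵀ * W₂)).trace + c₂ * (N * ((X * W₂ - Y)ᵀ * (X * W₂ - Y))).trace +
        (c₁ * (M * ((W₁ - W₂)ᵀ * (W₁ - W₂))).trace +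
          c₂ * (N * ((X * (W₁ - W₂))ᵀ * (X * (W₁ - W₂)))).trace) := by
  have hW := trace_mul_transpose_mul_add_self hM W₂ (W₁ - W₂)
  have hR := trace_mul_transpose_mul_add_self hN (X * W₂ - Y) (X * (W₁ - W₂))
  rw [add_sub_cancel] at hW
  rw [show X * W₂ - Y + X * (W₁ - W₂) = X * W₁ - Y by rw [Matrix.mul_sub]; abel] at hR
  have hcross : c₁ * ((W₁ - W₂)ᵀ * (W₂ * M)).trace +
      c₂ * ((X * (W₁ - W₂))ᵀ * ((X * W₂ - Y) * N)).trace = 0 := by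
    have h := congrArg (fun B => ((W₁ - W₂)ᵀ * B).trace) hstat
    simp only [Matrix.mul_add, Matrix.mul_smul, trace_add, trace_smul, smul_eq_mul,
      Matrix.mul_zero, trace_zero] at h
    rwa [transpose_mul, Matrix.mul_assoc]
  linear_combination c₁ * hW + c₂ * hR + 2 * hcross

end Matrix

section SmoothedObjective

variable {d n : ℕ} (X : Matrix (Fin d) (Fin n) ℝ) (lam p q μ : ℝ)

lemma mpow_eq_cfc {A : Matrix (Fin n) (Fin n) ℝ} (hA : A.IsHermitian) (r : ℝ) :
    mpow A r = hA.cfc fun x : ℝ => x ^ r := by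
  rw [mpow, dif_pos hA]

/-- The weight matrix `M_t` of the update equation, for `Z_t = W`. -/
noncomputable def schattenWeight (W : Matrix (Fin n) (Fin n) ℝ) : Matrix (Fin n) (Fin n) ℝ :=
  mpow (Wᵀ * W + μ ^ 2 • (1 : Matrix (Fin n) (Fin n) ℝ)) (p / 2 - 1)

/-- The diagonal of the weight matrix `N_t` of the update equation, for `Z_t = W`. -/
noncomputable def columnWeight (W : Matrix (Fin n) (Fin n) ℝ) : Fin n → ℝ :=
  fun i => (∑ j, ((X * W - X) j i) ^ 2 + μ ^ 2) ^ (q / 2 - 1)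

variable {X lam p q μ}

lemma smoothJ_add_le_of_update (hlam : 0 ≤ lam) (hμ : μ ≠ 0) (hp0 : 0 ≤ p) (hp2 : p ≤ 2)
    (hq0 : 0 ≤ q) (hq2 : q ≤ 2) {W₁ W₂ : Matrix (Fin n) (Fin n) ℝ}
    (hupd : p • (W₂ * schattenWeight p μ W₁) +
      (lam * q) • (Xᵀ * ((X * W₂ - X) * diagonal (columnWeight X q μ W₁))) = 0) :
    smoothJ X lam p q W₂ μ +
        (p / 2 * (schattenWeight p μ W₁ * ((W₁ - W₂)ᵀ * (W₁ - W₂))).trace +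
          lam * q / 2 *
            (diagonal (columnWeight X q μ W₁) * ((X * (W₁ - W₂))ᵀ * (X * (W₁ - W₂)))).trace) ≤
      smoothJ X lam p q W₁ μ := by
  have hμ2 : 0 < μ ^ 2 := by positivity
  have hpd₁ := W₁.posDef_transpose_mul_self_add_smul_one hμ2
  have hpd₂ := W₂.posDef_transpose_mul_self_add_smul_one hμ2
  set M := schattenWeight p μ W₁ with hM
  set ν := columnWeight X q μ W₁ with hν
  set e : Matrix (Fin n) (Fin n) ℝ → Fin n → ℝ := fun W i => ∑ j, ((X * W - X) j i) ^ 2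
  have hMsymm : Mᵀ = M := by
    rw [hM, schattenWeight, mpow_eq_cfc hpd₁.isHermitian, hpd₁.isHermitian.transpose_cfc]
  have hgram : (M * (W₂ᵀ * W₂ - W₁ᵀ * W₁)).trace =
      (M * (W₂ᵀ * W₂)).trace - (M * (W₁ᵀ * W₁)).trace := by
    rw [mul_sub, trace_sub]
  have hschatten : (mpow (W₂ᵀ * W₂ + μ ^ 2 • 1) (p / 2)).trace ≤
      (mpow (W₁ᵀ * W₁ + μ ^ 2 • 1) (p / 2)).trace +
        p / 2 * (M * (W₂ᵀ * W₂ - W₁ᵀ * W₁)).trace := by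
    have h := hpd₁.isHermitian.trace_cfc_rpow_le hpd₂.isHermitian hpd₁.eigenvalues_pos
      hpd₂.posSemidef.eigenvalues_nonneg (by linarith : 0 ≤ p / 2) (by linarith)
    rwa [add_sub_add_right_eq_sub, ← mpow_eq_cfc, ← mpow_eq_cfc, ← mpow_eq_cfc] at h
  have hcolumn : ∑ i, (e W₂ i + μ ^ 2) ^ (q / 2) ≤ ∑ i, (e W₁ i + μ ^ 2) ^ (q / 2) +
      q / 2 * (∑ i, ν i * e W₂ i - ∑ i, ν i * e W₁ i) := by
    rw [← Finset.sum_sub_distrib, Finset.mul_sum, ← Finset.sum_add_distrib]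
    refine Finset.sum_le_sum fun i _ => ?_
    have h := rpow_le_rpow_add_mul_sub (r := q / 2) (by positivity : 0 < e W₁ i + μ ^ 2)
      (by positivity : 0 ≤ e W₂ i + μ ^ 2) (by linarith) (by linarith)
    simp only [hν, columnWeight]
    linarith
  have hquad := trace_quadratic_eq_add_of_stationary X X hMsymm (diagonal_transpose ν) p
    (lam * q) W₁ W₂ hupd
  simp only [trace_diagonal_mul_transpose_mul_self] at hquad ⊢
  rw [hgram] at hschatten
  simp only [smoothJ]
  linarith [mul_le_mul_of_nonneg_left hcolumn hlam]

lemma smoothJ_eq_sum {W : Matrix (Fin n) (Fin n) ℝ}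
    (hA : (Wᵀ * W + μ ^ 2 • (1 : Matrix (Fin n) (Fin n) ℝ)).IsHermitian) :
    smoothJ X lam p q W μ = ∑ i, hA.eigenvalues i ^ (p / 2) +
      lam * ∑ i, (∑ j, ((X * W - X) j i) ^ 2 + μ ^ 2) ^ (q / 2) := by
  rw [smoothJ, mpow_eq_cfc hA, hA.trace_cfc]

lemma smoothJ_pos (hn : 0 < n) (hlam : 0 ≤ lam) (hμ : μ ≠ 0) (W : Matrix (Fin n) (Fin n) ℝ) :
    0 < smoothJ X lam p q W μ := by
  have hA := W.posDef_transpose_mul_self_add_smul_one (by positivity : 0 < μ ^ 2)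
  have : Nonempty (Fin n) := Fin.pos_iff_nonempty.mp hn
  rw [smoothJ_eq_sum hA.isHermitian]
  have hT : 0 < ∑ i, hA.isHermitian.eigenvalues i ^ (p / 2) :=
    Finset.sum_pos (fun i _ => Real.rpow_pos_of_pos (hA.eigenvalues_pos i) _) Finset.univ_nonempty
  have hC : 0 ≤ ∑ i, (∑ j, ((X * W - X) j i) ^ 2 + μ ^ 2) ^ (q / 2) := by positivity
  positivity

lemma smoothJ_add_le_of_update_of_le (hlam : 0 < lam) (hμ : μ ≠ 0) (hp0 : 0 < p) (hp2 : p ≤ 2)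
    (hq0 : 0 < q) (hq2 : q ≤ 2) {W₁ W₂ : Matrix (Fin n) (Fin n) ℝ}
    (hupd : p • (W₂ * schattenWeight p μ W₁) +
      (lam * q) • (Xᵀ * ((X * W₂ - X) * diagonal (columnWeight X q μ W₁))) = 0)
    {D θ : ℝ} (hJD : smoothJ X lam p q W₁ μ ≤ D) (hθp : θ ≤ D ^ ((p - 2) / p))
    (hθq : θ ≤ (D / lam) ^ ((q - 2) / q)) :
    smoothJ X lam p q W₂ μ + θ / 2 * (p * ∑ i, ∑ j, ((W₁ - W₂) i j) ^ 2 +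
        lam * q * ∑ i, ∑ j, ((X * (W₁ - W₂)) i j) ^ 2) ≤ smoothJ X lam p q W₁ μ := by
  have hA := W₁.posDef_transpose_mul_self_add_smul_one (by positivity : 0 < μ ^ 2)
  set c : Fin n → ℝ := fun i => ∑ j, ((X * W₁ - X) j i) ^ 2 + μ ^ 2
  have hc : ∀ i, 0 < c i := fun i => by positivity
  rw [smoothJ_eq_sum hA.isHermitian] at hJD
  have hT : ∀ i, hA.isHermitian.eigenvalues i ^ (p / 2) ≤ D := fun i => by
    have := Finset.single_le_sum (fun k _ => (Real.rpow_pos_of_pos (hA.eigenvalues_pos k)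
      (p / 2)).le) (Finset.mem_univ i)
    have : 0 ≤ lam * ∑ i, c i ^ (q / 2) := by positivity
    linarith
  have hC : ∀ i, c i ^ (q / 2) ≤ D / lam := fun i => by
    rw [le_div_iff₀ hlam]
    have := mul_le_mul_of_nonneg_left (Finset.single_le_sum (fun k _ =>
      (Real.rpow_pos_of_pos (hc k) (q / 2)).le) (Finset.mem_univ i)) hlam.le
    have : 0 ≤ ∑ i, hA.isHermitian.eigenvalues i ^ (p / 2) :=
      Finset.sum_nonneg fun k _ => (Real.rpow_pos_of_pos (hA.eigenvalues_pos k) _).le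
    linarith
  have hM : θ * ∑ i, ∑ j, ((W₁ - W₂) i j) ^ 2 ≤
      (schattenWeight p μ W₁ * ((W₁ - W₂)ᵀ * (W₁ - W₂))).trace := by
    rw [← trace_transpose_mul_self, schattenWeight, mpow_eq_cfc hA.isHermitian]
    exact hA.isHermitian.mul_trace_le_trace_cfc_mul (W₁ - W₂).posSemidef_transpose_mul_self
      fun i => hθp.trans (rpow_sub_div_le_rpow_half_sub_one (hA.eigenvalues_pos i) hp0 hp2 (hT i))
  have hN : θ * ∑ i, ∑ j, ((X * (W₁ - W₂)) i j) ^ 2 ≤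
      (diagonal (columnWeight X q μ W₁) * ((X * (W₁ - W₂))ᵀ * (X * (W₁ - W₂)))).trace := by
    rw [← trace_transpose_mul_self]
    exact mul_trace_le_trace_diagonal_mul (X * (W₁ - W₂)).posSemidef_transpose_mul_self
      fun i => hθq.trans (rpow_sub_div_le_rpow_half_sub_one (hc i) hq0 hq2 (hC i))
  have := smoothJ_add_le_of_update hlam.le hμ hp0.le hp2 hq0.le hq2 hupd
  linarith [mul_le_mul_of_nonneg_left hM (by positivity : (0 : ℝ) ≤ p / 2),
    mul_le_mul_of_nonneg_left hN (by positivity : (0 : ℝ) ≤ lam * q / 2)]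

end SmoothedObjective

lemma summable_and_tsum_le_of_descent {J f : ℕ → ℝ} {c : ℝ} (hc : 0 < c) (hJ : ∀ t, 0 ≤ J t)
    (hf : ∀ t, 0 ≤ f t) (hstep : ∀ t, J (t + 1) + c * f t ≤ J t) :
    Summable f ∧ ∑' t, f t ≤ J 0 / c := by
  have hpartial : ∀ T, ∑ t ∈ Finset.range T, f t ≤ J 0 / c := fun T => by
    rw [le_div_iff₀ hc, Finset.sum_mul]
    calc ∑ t ∈ Finset.range T, f t * c ≤ ∑ t ∈ Finset.range T, (J t - J (t + 1)) :=
          Finset.sum_le_sum fun t _ => by linarith [hstep t]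
      _ = J 0 - J T := Finset.sum_range_sub' J T
      _ ≤ J 0 := by linarith [hJ T]
  have hs := summable_of_sum_range_le hf hpartial
  exact ⟨hs, hs.tsum_le_of_sum_range_le hpartial⟩

/-- Inequality (28): if the sequence `(Z_t)` satisfies the IRLS update equation for every `t`,
then with `D = J(Z_1, μ)` and `θ = min{D^{(p−2)/p}, (D/λ)^{(q−2)/q}}` the series
`∑_t (p‖Z_t − Z_{t+1}‖_F² + λq‖X(Z_t − Z_{t+1})‖_F²)` converges and its sum is at most
`2D/θ`. -/
theorem stmt_16 {d n : ℕ} (hn : 1 ≤ n) (X : Matrix (Fin d) (Fin n) ℝ) (lam p q μ : ℝ)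
    (hlam : 0 < lam) (hμ : 0 < μ) (hp0 : 0 < p) (hp2 : p < 2) (hq0 : 0 < q) (hq2 : q < 2)
    (Z : ℕ → Matrix (Fin n) (Fin n) ℝ)
    (hupd : ∀ t, p • (Z (t + 1) *
        mpow ((Z t)ᵀ * Z t + μ ^ 2 • (1 : Matrix (Fin n) (Fin n) ℝ)) (p / 2 - 1)) +
      (lam * q) • (Xᵀ * ((X * Z (t + 1) - X) *
        Matrix.diagonal fun i => (∑ j, ((X * Z t - X) j i) ^ 2 + μ ^ 2) ^ (q / 2 - 1))) = 0)
    (D θ : ℝ) (hD : D = smoothJ X lam p q (Z 0) μ)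
    (hθ : θ = min (D ^ ((p - 2) / p)) ((D / lam) ^ ((q - 2) / q))) :
    Summable (fun t : ℕ => p * (∑ i, ∑ j, ((Z t - Z (t + 1)) i j) ^ 2) +
        lam * q * (∑ i, ∑ j, ((X * (Z t - Z (t + 1))) i j) ^ 2)) ∧
      (∑' t : ℕ, (p * (∑ i, ∑ j, ((Z t - Z (t + 1)) i j) ^ 2) +
          lam * q * (∑ i, ∑ j, ((X * (Z t - Z (t + 1))) i j) ^ 2))) ≤ 2 * D / θ := by
  have hJpos := smoothJ_pos (X := X) (p := p) (q := q) hn hlam.le hμ.ne'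
  have hDpos : 0 < D := hD ▸ hJpos (Z 0)
  have hθpos : 0 < θ :=
    hθ ▸ lt_min (Real.rpow_pos_of_pos hDpos _) (Real.rpow_pos_of_pos (div_pos hDpos hlam) _)
  have hf : ∀ t, 0 ≤ p * (∑ i, ∑ j, ((Z t - Z (t + 1)) i j) ^ 2) +
      lam * q * (∑ i, ∑ j, ((X * (Z t - Z (t + 1))) i j) ^ 2) := fun t => by positivity
  have hstep := fun t (hJD : smoothJ X lam p q (Z t) μ ≤ D) =>
    smoothJ_add_le_of_update_of_le hlam hμ.ne' hp0 hp2.le hq0 hq2.le (hupd t) hJD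
      (hθ ▸ min_le_left _ _) (hθ ▸ min_le_right _ _)
  have hJD : ∀ t, smoothJ X lam p q (Z t) μ ≤ D := by
    intro t
    induction t with
    | zero => exact hD.ge
    | succ t ih => linarith [hstep t ih, mul_nonneg (half_pos hθpos).le (hf t)]
  obtain ⟨hs, hle⟩ := summable_and_tsum_le_of_descent (half_pos hθpos) (fun t => (hJpos (Z t)).le)
    hf fun t => hstep t (hJD t)
  refine ⟨hs, hle.trans_eq ?_⟩
  rw [← hD]
  field_simp
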